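/- Let X and Y be finite simple graphs. Then ϑ⁻(X[Y]) = ϑ⁻(X)·ϑ⁻(Y) = ϑ⁻(X * Y), where for a graph Z, ϑ⁻(Z) is the supremum of ∑_{z,z'} M_{z,z'} over doubly nonnegative matrices M indexed by V(Z) with tr(M) = 1 and M_{z,z'} = 0 whenever z is adjacent to z' in Z. -/

import Mathlib

open Matrix

/-- A real matrix is completely positive if it equals `Pᵀ * P`
for some entrywise nonnegative real matrix `P`. -/
def IsCP {ι : Type*} (H : Matrix ι ι ℝ) : Prop :=
  ∃ (n : ℕ) (P : Matrix (Fin n) ι ℝ), (∀ i j, 0 ≤ P i j) ∧ H = Pᵀ * P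

/-- A real matrix indexed by `ι` is completely positive semidefinite if it is the Gram
matrix of real positive semidefinite `d × d` matrices for some `d ≥ 1`. -/
def IsCPSD {ι : Type*} (H : Matrix ι ι ℝ) : Prop :=
  ∃ d : ℕ, 0 < d ∧ ∃ ρ : ι → Matrix (Fin d) (Fin d) ℝ,
    (∀ i, (ρ i).PosSemidef) ∧ ∀ i j, H i j = (ρ i * ρ j).trace

/-- A real matrix is doubly nonnegative if it is positive semidefinite
and entrywise nonnegative. -/
def IsDNN {ι : Type*} [Fintype ι] (H : Matrix ι ι ℝ) : Prop :=
  H.PosSemidef ∧ ∀ i j, 0 ≤ H i j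

/-- Schrijver's theta `ϑ⁻(Z)`: optimize over doubly nonnegative matrices. -/
noncomputable def thetaMinus {γ : Type*} [Fintype γ] (Z : SimpleGraph γ) : ℝ :=
  sSup {r : ℝ | ∃ M : Matrix γ γ ℝ, IsDNN M ∧ M.trace = 1 ∧
    (∀ z z', Z.Adj z z' → M z z' = 0) ∧ r = ∑ z, ∑ z', M z z'}

/-- Szegedy's theta of the complement, `ϑ̄⁺(Z) = Θ^{DNN}(Z)`. -/
noncomputable def thetaBarPlus {γ : Type*} [Fintype γ] (Z : SimpleGraph γ) : ℝ :=
  sInf {t : ℝ | ∃ N : Matrix γ γ ℝ, IsDNN N ∧ (∀ z, N z z = t) ∧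
    (∀ z z', Z.Adj z z' → N z z' = 0) ∧
    (N - Matrix.of fun _ _ => (1 : ℝ)).PosSemidef}

/-- The lexicographic product `X[Y]`. -/
def lexProd {α β : Type*} (X : SimpleGraph α) (Y : SimpleGraph β) :
    SimpleGraph (α × β) where
  Adj p q := X.Adj p.1 q.1 ∨ (p.1 = q.1 ∧ Y.Adj p.2 q.2)
  symm := by
    constructor
    rintro ⟨x, y⟩ ⟨x', y'⟩ (h | ⟨h1, h2⟩)
    · exact Or.inl h.symm
    · exact Or.inr ⟨h1.symm, h2.symm⟩
  loopless := by constructor; rintro ⟨x, y⟩ (h | ⟨_, h⟩) <;> exact h.ne rfl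

/-- The disjunctive product `X * Y`. -/
def disjProd {α β : Type*} (X : SimpleGraph α) (Y : SimpleGraph β) :
    SimpleGraph (α × β) where
  Adj p q := X.Adj p.1 q.1 ∨ Y.Adj p.2 q.2
  symm := by
    constructor
    rintro ⟨x, y⟩ ⟨x', y'⟩ (h | h)
    · exact Or.inl h.symm
    · exact Or.inr h.symm
  loopless := by constructor; rintro ⟨x, y⟩ (h | h) <;> exact h.ne rfl

/-!
Both bounds come from the homogeneous form `∑ M ≤ tr M · ϑ⁻(Z)` of the definition, valid for
every doubly nonnegative `M` vanishing on the edges of `Z`. If `M` is feasible for `X[Y]`, each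
diagonal block `M[(x, ·), (x, ·)]` vanishes on the edges of `Y`, so the block-sum matrix
`B x x' = ∑ y y', M (x, y) (x', y')`, a doubly nonnegative matrix vanishing on the edges of `X`,
has trace at most `ϑ⁻(Y)`; hence `∑ M = ∑ B ≤ ϑ⁻(X) ϑ⁻(Y)`. Conversely, Kronecker products of
feasible matrices for `X` and `Y` are feasible for `X * Y`, and `ϑ⁻` is antitone in the graph,
while `X[Y]` is a subgraph of `X * Y`.
-/

open Kronecker

theorem Real.sSup_mul_sSup_le {s t : Set ℝ} {c : ℝ} (hs : ∀ r ∈ s, 0 ≤ r) (ht : ∀ u ∈ t, 0 ≤ u)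
    (hc : 0 ≤ c) (h : ∀ r ∈ s, ∀ u ∈ t, r * u ≤ c) : sSup s * sSup t ≤ c := by
  have hs_mul : ∀ r ∈ s, r * sSup t ≤ c := fun r hr => by
    rw [← smul_eq_mul, ← Real.sSup_smul_of_nonneg (hs r hr)]
    refine Real.sSup_le ?_ hc
    rintro _ ⟨u, hu, rfl⟩
    exact h r hr u hu
  rw [mul_comm, ← smul_eq_mul, ← Real.sSup_smul_of_nonneg (Real.sSup_nonneg ht)]
  refine Real.sSup_le ?_ hc
  rintro _ ⟨r, hr, rfl⟩
  exact (mul_comm _ _).trans_le (hs_mul r hr)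

namespace Matrix

variable {ι : Type*} [Fintype ι]

theorem PosSemidef.apply_le_half_add {M : Matrix ι ι ℝ} (hM : M.PosSemidef) (i j : ι) :
    M i j ≤ (M i i + M j j) / 2 := by
  classical
  have h := hM.dotProduct_mulVec_nonneg (Pi.single i 1 - Pi.single j 1)
  have hsym : M j i = M i j := hM.1.apply i j
  simp only [star_trivial, mulVec_sub, dotProduct_sub, sub_dotProduct, mulVec_single,
    single_dotProduct, MulOpposite.op_one, col_apply, one_smul, one_mul,
    sub_nonneg, tsub_le_iff_right] at h
  linarith

theorem PosSemidef.sum_apply_le_card_mul_trace {M : Matrix ι ι ℝ} (hM : M.PosSemidef) :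
    ∑ i, ∑ j, M i j ≤ Fintype.card ι * M.trace := by
  calc ∑ i, ∑ j, M i j ≤ ∑ i, ∑ j, (M i i + M j j) / 2 :=
        Finset.sum_le_sum fun i _ => Finset.sum_le_sum fun j _ => hM.apply_le_half_add i j
    _ = Fintype.card ι * M.trace := by
        simp only [trace, diag, add_div, Finset.sum_add_distrib, Finset.sum_const,
          Finset.card_univ, nsmul_eq_mul, ← Finset.sum_div, ← Finset.mul_sum]
        ring

def blockSum {α β : Type*} [Fintype β] (M : Matrix (α × β) (α × β) ℝ) : Matrix α α ℝ :=
  of fun x x' => ∑ y, ∑ y', M (x, y) (x', y')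

variable {α β : Type*} [Fintype α] [Fintype β]

theorem PosSemidef.blockSum {M : Matrix (α × β) (α × β) ℝ} (hM : M.PosSemidef) :
    M.blockSum.PosSemidef := by
  rw [posSemidef_iff_dotProduct_mulVec]
  refine ⟨?_, fun v => ?_⟩
  · ext x x'
    simp only [conjTranspose_apply, star_trivial, Matrix.blockSum, of_apply]
    rw [Finset.sum_comm]
    exact Finset.sum_congr rfl fun y _ => Finset.sum_congr rfl fun y' _ => hM.1.apply _ _
  · have hquad : star v ⬝ᵥ (M.blockSum *ᵥ v) =
        star (v ∘ Prod.fst) ⬝ᵥ (M *ᵥ (v ∘ Prod.fst)) := by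
      simp only [star_trivial, dotProduct, mulVec, Fintype.sum_prod_type, Matrix.blockSum,
        of_apply, Finset.mul_sum, Finset.sum_mul, Function.comp_apply]
      exact Finset.sum_congr rfl fun x _ => Finset.sum_comm
    rw [hquad]
    exact hM.dotProduct_mulVec_nonneg _

theorem sum_blockSum (M : Matrix (α × β) (α × β) ℝ) :
    ∑ x, ∑ x', M.blockSum x x' = ∑ p, ∑ q, M p q := by
  simp only [Matrix.blockSum, of_apply, Fintype.sum_prod_type]
  exact Finset.sum_congr rfl fun x _ => Finset.sum_comm

theorem trace_blockSum (M : Matrix (α × β) (α × β) ℝ) :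
    M.blockSum.trace = ∑ x, ∑ y, ∑ y', M (x, y) (x, y') := rfl

end Matrix

namespace IsDNN

variable {ι κ : Type*} [Fintype ι] [Fintype κ]

theorem smul {M : Matrix ι ι ℝ} (hM : IsDNN M) {c : ℝ} (hc : 0 ≤ c) : IsDNN (c • M) :=
  ⟨hM.1.smul hc, fun i j => mul_nonneg hc (hM.2 i j)⟩

theorem submatrix {M : Matrix ι ι ℝ} (hM : IsDNN M) (e : κ → ι) : IsDNN (M.submatrix e e) :=
  ⟨hM.1.submatrix e, fun i j => hM.2 (e i) (e j)⟩

theorem kronecker {M : Matrix ι ι ℝ} {N : Matrix κ κ ℝ} (hM : IsDNN M) (hN : IsDNN N) :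
    IsDNN (M ⊗ₖ N) :=
  ⟨hM.1.kronecker hN.1, fun _ _ => mul_nonneg (hM.2 _ _) (hN.2 _ _)⟩

theorem blockSum {α β : Type*} [Fintype α] [Fintype β] {M : Matrix (α × β) (α × β) ℝ}
    (hM : IsDNN M) : IsDNN M.blockSum :=
  ⟨hM.1.blockSum, fun _ _ => Finset.sum_nonneg fun _ _ => Finset.sum_nonneg fun _ _ => hM.2 _ _⟩

theorem trace_nonneg {M : Matrix ι ι ℝ} (hM : IsDNN M) : 0 ≤ M.trace :=
  Finset.sum_nonneg fun i _ => hM.2 i i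

end IsDNN

section ThetaMinus

variable {γ : Type*} [Fintype γ]

def thetaMinusValues (Z : SimpleGraph γ) : Set ℝ :=
  {r : ℝ | ∃ M : Matrix γ γ ℝ, IsDNN M ∧ M.trace = 1 ∧
    (∀ z z', Z.Adj z z' → M z z' = 0) ∧ r = ∑ z, ∑ z', M z z'}

theorem nonneg_of_mem_thetaMinusValues {Z : SimpleGraph γ} {r : ℝ}
    (hr : r ∈ thetaMinusValues Z) : 0 ≤ r := by
  obtain ⟨M, hM, -, -, rfl⟩ := hr
  exact Finset.sum_nonneg fun z _ => Finset.sum_nonneg fun z' _ => hM.2 z z'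

theorem bddAbove_thetaMinusValues (Z : SimpleGraph γ) : BddAbove (thetaMinusValues Z) := by
  refine ⟨Fintype.card γ, ?_⟩
  rintro _ ⟨M, hM, htr, -, rfl⟩
  simpa [htr] using hM.1.sum_apply_le_card_mul_trace

theorem thetaMinus_nonneg (Z : SimpleGraph γ) : 0 ≤ thetaMinus Z :=
  Real.sSup_nonneg fun _ => nonneg_of_mem_thetaMinusValues

theorem le_thetaMinus {Z : SimpleGraph γ} {r : ℝ} (hr : r ∈ thetaMinusValues Z) :
    r ≤ thetaMinus Z :=
  le_csSup (bddAbove_thetaMinusValues Z) hr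

theorem thetaMinus_le {Z : SimpleGraph γ} {c : ℝ} (hc : 0 ≤ c)
    (h : ∀ M : Matrix γ γ ℝ, IsDNN M → M.trace = 1 → (∀ z z', Z.Adj z z' → M z z' = 0) →
      ∑ z, ∑ z', M z z' ≤ c) :
    thetaMinus Z ≤ c := by
  refine Real.sSup_le ?_ hc
  rintro _ ⟨M, hM, htr, hadj, rfl⟩
  exact h M hM htr hadj

theorem sum_le_trace_mul_thetaMinus {Z : SimpleGraph γ} {M : Matrix γ γ ℝ} (hM : IsDNN M)
    (hadj : ∀ z z', Z.Adj z z' → M z z' = 0) :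
    ∑ z, ∑ z', M z z' ≤ M.trace * thetaMinus Z := by
  rcases hM.trace_nonneg.eq_or_lt with htr | htr
  · simp [(hM.1.trace_eq_zero_iff.1 htr.symm)]
  · have hmem : M.trace⁻¹ * ∑ z, ∑ z', M z z' ∈ thetaMinusValues Z := by
      refine ⟨M.trace⁻¹ • M, hM.smul (inv_nonneg.2 htr.le), ?_, ?_, ?_⟩
      · rw [trace_smul, smul_eq_mul, inv_mul_cancel₀ htr.ne']
      · intro z z' h
        simp [hadj z z' h]
      · simp only [Matrix.smul_apply, smul_eq_mul, ← Finset.mul_sum]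
    calc ∑ z, ∑ z', M z z' = M.trace * (M.trace⁻¹ * ∑ z, ∑ z', M z z') := by
          rw [mul_inv_cancel_left₀ htr.ne']
      _ ≤ M.trace * thetaMinus Z := mul_le_mul_of_nonneg_left (le_thetaMinus hmem) htr.le

theorem thetaMinus_anti {G H : SimpleGraph γ} (hGH : G ≤ H) : thetaMinus H ≤ thetaMinus G :=
  thetaMinus_le (thetaMinus_nonneg G) fun _ hM htr hadj =>
    le_thetaMinus ⟨_, hM, htr, fun z z' h => hadj z z' (hGH h), rfl⟩

end ThetaMinus

theorem lexProd_le_disjProd {α β : Type*} (X : SimpleGraph α) (Y : SimpleGraph β) :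
    lexProd X Y ≤ disjProd X Y :=
  fun _ _ h => h.imp id And.right

section Products

variable {α β : Type*} [Fintype α] [Fintype β]

theorem thetaMinus_lexProd_le (X : SimpleGraph α) (Y : SimpleGraph β) :
    thetaMinus (lexProd X Y) ≤ thetaMinus X * thetaMinus Y := by
  refine thetaMinus_le (mul_nonneg (thetaMinus_nonneg X) (thetaMinus_nonneg Y))
    fun M hM htr hadj => ?_
  have hBadj : ∀ x x', X.Adj x x' → M.blockSum x x' = 0 := fun x x' h =>
    Finset.sum_eq_zero fun y _ => Finset.sum_eq_zero fun y' _ => hadj _ _ (Or.inl h)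
  have hblock : ∀ x, ∑ y, ∑ y', M (x, y) (x, y') ≤ (∑ y, M (x, y) (x, y)) * thetaMinus Y :=
    fun x => sum_le_trace_mul_thetaMinus (hM.submatrix (Prod.mk x))
      fun y y' h => hadj _ _ (Or.inr ⟨rfl, h⟩)
  have htrB : M.blockSum.trace ≤ thetaMinus Y := by
    calc M.blockSum.trace = ∑ x, ∑ y, ∑ y', M (x, y) (x, y') := trace_blockSum M
      _ ≤ ∑ x, (∑ y, M (x, y) (x, y)) * thetaMinus Y := Finset.sum_le_sum fun x _ => hblock x
      _ = M.trace * thetaMinus Y := by rw [← Finset.sum_mul, trace, Fintype.sum_prod_type]; rfl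
      _ = thetaMinus Y := by rw [htr, one_mul]
  calc ∑ p, ∑ q, M p q = ∑ x, ∑ x', M.blockSum x x' := (sum_blockSum M).symm
    _ ≤ M.blockSum.trace * thetaMinus X := sum_le_trace_mul_thetaMinus hM.blockSum hBadj
    _ ≤ thetaMinus X * thetaMinus Y := by
        rw [mul_comm]; exact mul_le_mul_of_nonneg_left htrB (thetaMinus_nonneg X)

theorem mul_mem_thetaMinusValues_disjProd {X : SimpleGraph α} {Y : SimpleGraph β} {r s : ℝ}
    (hr : r ∈ thetaMinusValues X) (hs : s ∈ thetaMinusValues Y) :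
    r * s ∈ thetaMinusValues (disjProd X Y) := by
  obtain ⟨M, hM, hMtr, hMadj, rfl⟩ := hr
  obtain ⟨N, hN, hNtr, hNadj, rfl⟩ := hs
  refine ⟨M ⊗ₖ N, hM.kronecker hN, by rw [trace_kronecker, hMtr, hNtr, mul_one], ?_, ?_⟩
  · rintro p q (h | h)
    · simp [hMadj _ _ h]
    · simp [hNadj _ _ h]
  · simp only [kroneckerMap_apply, Fintype.sum_prod_type, Finset.sum_mul_sum]

theorem mul_le_thetaMinus_disjProd (X : SimpleGraph α) (Y : SimpleGraph β) :
    thetaMinus X * thetaMinus Y ≤ thetaMinus (disjProd X Y) :=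
  Real.sSup_mul_sSup_le (fun _ => nonneg_of_mem_thetaMinusValues)
    (fun _ => nonneg_of_mem_thetaMinusValues) (thetaMinus_nonneg _)
    fun _ hr _ hs => le_thetaMinus (mul_mem_thetaMinusValues_disjProd hr hs)

end Products

theorem stmt_14 {α β : Type*} [Fintype α] [Fintype β]
    (X : SimpleGraph α) (Y : SimpleGraph β) :
    thetaMinus (lexProd X Y) = thetaMinus X * thetaMinus Y ∧
    thetaMinus X * thetaMinus Y = thetaMinus (disjProd X Y) := by
  have hlex := thetaMinus_lexProd_le X Y
  have hdisj := mul_le_thetaMinus_disjProd X Y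
  have hmono := thetaMinus_anti (lexProd_le_disjProd X Y)
  exact ⟨le_antisymm hlex (hdisj.trans hmono), le_antisymm hdisj (hmono.trans hlex)⟩
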